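/- arXiv:math/0502294 — 6 statements merged into one kernel-verified Lean document; each statement's English description precedes it below -/
import Mathlib

section
/- In the spider-web crossbar graph G_{b,k,l} with base b ≥ 2, scale k ≥ 1 and depth l ≥ k, the number of directed paths from any given input to any given output equals b^{l-k}. -/
/-- `stepOK b k l u` : consecutive labels along `u` differ at most in position
`j ≡ m (mod k)` at stage `m` (stages 1-indexed; positions 0-indexed, so the
position changed at stage `m` has 0-based index `(m-1) % k`). -/
def stepOK (b k l : ℕ) (u : Fin (l + 1) → Fin k → Fin b) : Prop :=
  ∀ m : Fin l, ∀ i : Fin k, (i : ℕ) ≠ (m : ℕ) % k → u m.castSucc i = u m.succ i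

/-- Paths from input `v` (rank 0) to output `w` (rank `l`) in the spider-web
crossbar graph `G_{b,k,l}`. -/
def SpiderPath (b k l : ℕ) (v w : Fin k → Fin b) : Type :=
  { u : Fin (l + 1) → Fin k → Fin b // u 0 = v ∧ u (Fin.last l) = w ∧ stepOK b k l u }

/-!
Step `m` of a path can only rewrite coordinate `m % k`. Removing the last step of a path of
length `l + 1 > k` leaves a path of length `l` whose endpoint agrees with `w` except at
coordinate `l % k`, where any of the `b` values is possible; this gives a factor `b` per step
beyond `k`. For `l = k` each coordinate `i` is rewritten exactly once, at step `i`, so the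
path is forced: it reads `w` on the coordinates below the current rank and `v` on the others.
-/

open Function

section

variable {b k : ℕ}

instance (l : ℕ) (v w : Fin k → Fin b) : Finite (SpiderPath b k l v w) :=
  Subtype.finite

theorem stepOK.apply_eq_apply_of_mod_ne {l : ℕ} {u : Fin (l + 1) → Fin k → Fin b}
    (hu : stepOK b k l u) {i : Fin k} {a c : Fin (l + 1)} (hac : a ≤ c)
    (hfix : ∀ m : Fin l, a ≤ m.castSucc → m.succ ≤ c → (m : ℕ) % k ≠ i) :
    u a i = u c i := by
  induction c using Fin.induction with
  | zero => rw [Fin.le_zero_iff.mp hac]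
  | succ m ih =>
    rcases hac.eq_or_lt with rfl | hlt
    · rfl
    have ham : a ≤ m.castSucc := Fin.le_castSucc_iff.mpr hlt
    rw [ih ham fun m' h₁ h₂ => hfix m' h₁ (h₂.trans (Fin.castSucc_le_succ m)),
      hu m i (hfix m ham le_rfl).symm]

theorem stepOK_succ_iff {l : ℕ} (u : Fin (l + 2) → Fin k → Fin b) :
    stepOK b k (l + 1) u ↔ stepOK b k l (Fin.init u) ∧
      ∀ i : Fin k, (i : ℕ) ≠ l % k → u (Fin.last l).castSucc i = u (Fin.last (l + 1)) i := by
  simp only [stepOK, Fin.forall_fin_succ' (P := fun m : Fin (l + 1) => ∀ i : Fin k, _),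
    Fin.init, Fin.succ_castSucc, Fin.val_castSucc, Fin.val_last, Fin.succ_last]

def straightPath (v w : Fin k → Fin b) : Fin (k + 1) → Fin k → Fin b :=
  fun n i => if (i : ℕ) < n then w i else v i

theorem stepOK_straightPath (v w : Fin k → Fin b) : stepOK b k k (straightPath v w) := by
  intro m i hi
  rw [Nat.mod_eq_of_lt m.isLt] at hi
  simp only [straightPath, Fin.val_castSucc, Fin.val_succ,
    show (i : ℕ) < m + 1 ↔ (i : ℕ) < m by omega]

theorem eq_straightPath {v w : Fin k → Fin b} (p : SpiderPath b k k v w) :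
    p.1 = straightPath v w := by
  obtain ⟨u, h0, hw, hu⟩ := p
  funext n i
  simp only [straightPath]
  split_ifs with hin
  · rw [← hw, hu.apply_eq_apply_of_mod_ne (Fin.le_last n) fun m hm _ => ?_]
    rw [Nat.mod_eq_of_lt m.isLt]
    exact (hin.trans_le hm).ne'
  · rw [← h0, hu.apply_eq_apply_of_mod_ne (Fin.zero_le n) fun m _ hm => ?_]
    rw [Nat.mod_eq_of_lt m.isLt]
    exact fun h => hin (h ▸ hm)

instance (v w : Fin k → Fin b) : Unique (SpiderPath b k k v w) where
  default := ⟨straightPath v w, funext fun i => by simp [straightPath],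
    funext fun i => by simp [straightPath], stepOK_straightPath v w⟩
  uniq p := Subtype.ext (eq_straightPath p)

theorem init_eq_update_of_stepOK {l : ℕ} {u : Fin (l + 2) → Fin k → Fin b}
    (hu : stepOK b k (l + 1) u) (hk : 0 < k) :
    Fin.init u (Fin.last l) = update (u (Fin.last (l + 1))) ⟨l % k, Nat.mod_lt l hk⟩
      (u (Fin.last l).castSucc ⟨l % k, Nat.mod_lt l hk⟩) :=
  eq_update_iff.mpr ⟨rfl, fun i hi => (stepOK_succ_iff u).1 hu |>.2 i fun h => hi (Fin.ext h)⟩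

def spiderPathSuccEquiv (hk : 0 < k) (l : ℕ) (v w : Fin k → Fin b) :
    SpiderPath b k (l + 1) v w ≃
      Σ x : Fin b, SpiderPath b k l v (update w ⟨l % k, Nat.mod_lt l hk⟩ x) where
  toFun q := ⟨q.1 (Fin.last l).castSucc ⟨l % k, Nat.mod_lt l hk⟩, Fin.init q.1,
    q.2.1, by rw [init_eq_update_of_stepOK q.2.2.2 hk, q.2.2.1],
    ((stepOK_succ_iff q.1).1 q.2.2.2).1⟩
  invFun s := ⟨Fin.snoc s.2.1 w, (Fin.snoc_castSucc (i := 0) _ _).trans s.2.2.1, Fin.snoc_last _ _,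
    (stepOK_succ_iff _).2 ⟨by simpa using s.2.2.2.2, fun i hi => by
      simp [s.2.2.2.1, update_of_ne (Fin.ne_of_val_ne (j := ⟨l % k, Nat.mod_lt l hk⟩) hi)]⟩⟩
  left_inv q := Subtype.ext (by simpa [q.2.2.1] using Fin.snoc_init_self q.1)
  right_inv s := Sigma.subtype_ext (by simp [s.2.2.2.1]) (by simp)

end

theorem spiderweb_path_count_general (b k l : ℕ) (hk : 1 ≤ k) (hl : k ≤ l)
    (v w : Fin k → Fin b) :
    Nat.card (SpiderPath b k l v w) = b ^ (l - k) := by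
  induction l, hl using Nat.le_induction generalizing w with
  | base => simp
  | succ l hl ih =>
    rw [Nat.card_congr (spiderPathSuccEquiv hk l v w), Nat.card_sigma]
    simp only [ih, Finset.sum_const, Finset.card_univ, Fintype.card_fin, smul_eq_mul]
    rw [Nat.sub_add_comm hl, pow_succ']

theorem spiderweb_path_count (b k l : ℕ) (hb : 2 ≤ b) (hk : 1 ≤ k) (hl : k ≤ l)
    (v w : Fin k → Fin b) :
    Nat.card (SpiderPath b k l v w) = b ^ (l - k) :=
  spiderweb_path_count_general b k l hk hl v w
end

section
/- In the spider-web crossbar graph G_{b,k,l} with base b ≥ 2, scale k ≥ 1 and depth l < k, any given input and output are joined by at most one path; moreover there is exactly one path joining them if their labels agree in the last k-l positions, and no path otherwise. -/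
/-!
Since `l < k`, stage `m` of a path of depth `l` can only change position `m` of the label, so each
position `i < l` changes at most once (at stage `i`) and positions `i ≥ l` never change. Hence the
label at rank `m` of any path from `v` to `w` is forced: it agrees with `w` before position `m` and
with `v` from position `m` on, and this sequence of labels is a path exactly when `v` and `w` agree
in the positions `i ≥ l`.
-/

namespace Fin

variable {α : Type*} {n j : ℕ} {f : Fin (n + 1) → α}

theorem apply_eq_apply_zero_of_val_le (hf : ∀ m : Fin n, (m : ℕ) ≠ j → f m.castSucc = f m.succ)
    (m : Fin (n + 1)) (hm : (m : ℕ) ≤ j) : f m = f 0 := by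
  induction m using Fin.induction with
  | zero => rfl
  | succ m ih =>
    rw [val_succ] at hm
    rw [← hf m (by omega)]
    exact ih (by rw [val_castSucc]; omega)

theorem apply_eq_apply_last_of_lt_val (hf : ∀ m : Fin n, (m : ℕ) ≠ j → f m.castSucc = f m.succ)
    (m : Fin (n + 1)) (hm : j < (m : ℕ)) : f m = f (last n) := by
  induction m using Fin.reverseInduction with
  | last => rfl
  | cast m ih =>
    rw [val_castSucc] at hm
    rw [hf m (by omega)]
    exact ih (by rw [val_succ]; omega)

end Fin

section SpiderPath

variable {b k l : ℕ}

theorem stepOK.apply_castSucc_eq_apply_succ (hl : l < k) {u : Fin (l + 1) → Fin k → Fin b}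
    (hu : stepOK b k l u) (i : Fin k) (m : Fin l) (hm : (m : ℕ) ≠ i) :
    u m.castSucc i = u m.succ i :=
  hu m i (by rw [Nat.mod_eq_of_lt (m.isLt.trans hl)]; exact hm.symm)

def shallowPath (v w : Fin k → Fin b) (m : Fin (l + 1)) (i : Fin k) : Fin b :=
  if (i : ℕ) < m then w i else v i

theorem stepOK.eq_shallowPath (hl : l < k) {u : Fin (l + 1) → Fin k → Fin b}
    (hu : stepOK b k l u) : u = shallowPath (u 0) (u (Fin.last l)) := by
  funext m i
  have hstep := hu.apply_castSucc_eq_apply_succ hl i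
  unfold shallowPath
  split_ifs with him
  · exact Fin.apply_eq_apply_last_of_lt_val (f := fun m => u m i) hstep m him
  · exact Fin.apply_eq_apply_zero_of_val_le (f := fun m => u m i) hstep m (by omega)

theorem stepOK_shallowPath (hl : l < k) (v w : Fin k → Fin b) :
    stepOK b k l (shallowPath v w) := by
  intro m i hi
  rw [Nat.mod_eq_of_lt (m.isLt.trans hl)] at hi
  simp only [shallowPath, Fin.val_castSucc, Fin.val_succ]
  split_ifs <;> first | rfl | omega

theorem SpiderPath.subsingleton (hl : l < k) (v w : Fin k → Fin b) :
    Subsingleton (SpiderPath b k l v w) := by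
  refine ⟨fun ⟨u, hu0, hul, hu⟩ ⟨u', hu0', hul', hu'⟩ => Subtype.ext ?_⟩
  change u = u'
  rw [hu.eq_shallowPath hl, hu'.eq_shallowPath hl, hu0, hul, hu0', hul']

theorem SpiderPath.nonempty_iff (hl : l < k) (v w : Fin k → Fin b) :
    Nonempty (SpiderPath b k l v w) ↔ ∀ i : Fin k, l ≤ (i : ℕ) → v i = w i := by
  constructor
  · rintro ⟨u, hu0, hul, hu⟩ i hi
    rw [← hu0, ← hul]
    exact (Fin.apply_eq_apply_zero_of_val_le (f := fun m => u m i)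
      (hu.apply_castSucc_eq_apply_succ hl i) (Fin.last l) hi).symm
  · intro hvw
    refine ⟨shallowPath v w, ?_, ?_, stepOK_shallowPath hl v w⟩ <;> funext i
    · simp [shallowPath]
    · by_cases hi : (i : ℕ) < l
      · simp [shallowPath, hi]
      · simp [shallowPath, hi, hvw i (by omega)]

end SpiderPath

theorem spiderweb_shallow_path_count_general (b k l : ℕ)
    (hl : l < k) (v w : Fin k → Fin b) :
    Nat.card (SpiderPath b k l v w) ≤ 1 ∧
    ((∀ i : Fin k, l ≤ (i : ℕ) → v i = w i) →
      Nat.card (SpiderPath b k l v w) = 1) ∧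
    ((¬ ∀ i : Fin k, l ≤ (i : ℕ) → v i = w i) →
      Nat.card (SpiderPath b k l v w) = 0) := by
  have hsub := SpiderPath.subsingleton hl v w
  have hne := SpiderPath.nonempty_iff hl v w
  refine ⟨Finite.card_le_one_iff_subsingleton.mpr hsub, fun h => ?_, fun h => ?_⟩
  · have := hne.mpr h
    exact Nat.card_unique
  · have := not_nonempty_iff.mp (hne.not.mpr h)
    exact Nat.card_of_isEmpty

theorem spiderweb_shallow_path_count (b k l : ℕ) (hb : 2 ≤ b) (hk : 1 ≤ k)
    (hl : l < k) (v w : Fin k → Fin b) :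
    Nat.card (SpiderPath b k l v w) ≤ 1 ∧
    ((∀ i : Fin k, l ≤ (i : ℕ) → v i = w i) →
      Nat.card (SpiderPath b k l v w) = 1) ∧
    ((¬ ∀ i : Fin k, l ≤ (i : ℕ) → v i = w i) →
      Nat.card (SpiderPath b k l v w) = 0) :=
  spiderweb_shallow_path_count_general b k l hl v w
end

section
/- The automorphism group of the spider-web crossbar graph G_{b,k,l} acts transitively on the set of directed paths from inputs to outputs. -/
/-- Adjacency in the spider-web graph `G_{b,k,l}` on the vertex set
`Fin (l+1) × (Fin k → Fin b)` (rank, label): there is an edge of stage `m+1`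
from a rank-`m` vertex to a rank-`(m+1)` vertex iff their labels differ at most
in the position with 0-based index `m % k`. -/
def SpiderAdj (b k l : ℕ) (x y : Fin (l + 1) × (Fin k → Fin b)) : Prop :=
  ∃ m : Fin l, x.1 = m.castSucc ∧ y.1 = m.succ ∧
    ∀ i : Fin k, (i : ℕ) ≠ (m : ℕ) % k → x.2 i = y.2 i

/-!
Any family of permutations `π m i` of the alphabet, applied to coordinate `i` of the labels
at rank `m`, is an automorphism as soon as `π` is constant along every stage in the positions
that stage freezes, i.e. as soon as `π` itself satisfies the path condition. Swapping
`u m i` with `u' m i` is such a family when `u` and `u'` are paths, and it sends `u` to `u'`.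
-/

/-- The path condition of `stepOK`, for rank-indexed labels with values in any type. -/
def StageCompatible {β : Type*} (k l : ℕ) (f : Fin (l + 1) → Fin k → β) : Prop :=
  ∀ m : Fin l, ∀ i : Fin k, (i : ℕ) ≠ (m : ℕ) % k → f m.castSucc i = f m.succ i

section LabelPerm

variable {b k l : ℕ}

def labelPerm (π : Fin (l + 1) → Fin k → Equiv.Perm (Fin b)) :
    Equiv.Perm (Fin (l + 1) × (Fin k → Fin b)) :=
  Equiv.prodShear (Equiv.refl _) fun m => Equiv.piCongrRight (π m)

@[simp]
lemma labelPerm_apply (π : Fin (l + 1) → Fin k → Equiv.Perm (Fin b))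
    (x : Fin (l + 1) × (Fin k → Fin b)) :
    labelPerm π x = (x.1, fun i => π x.1 i (x.2 i)) :=
  rfl

lemma spiderAdj_labelPerm_iff {π : Fin (l + 1) → Fin k → Equiv.Perm (Fin b)}
    (hπ : StageCompatible k l π) (x y : Fin (l + 1) × (Fin k → Fin b)) :
    SpiderAdj b k l (labelPerm π x) (labelPerm π y) ↔ SpiderAdj b k l x y := by
  simp only [SpiderAdj, labelPerm_apply]
  refine exists_congr fun m => and_congr_right fun hx => and_congr_right fun hy =>
    forall₂_congr fun i hi => ?_
  rw [hx, hy, hπ m i hi]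
  exact (π _ _).apply_eq_iff_eq

end LabelPerm

lemma StageCompatible.swap {β : Type*} [DecidableEq β] {k l : ℕ}
    {u u' : Fin (l + 1) → Fin k → β} (hu : StageCompatible k l u)
    (hu' : StageCompatible k l u') :
    StageCompatible k l fun m i => Equiv.swap (u m i) (u' m i) := by
  intro m i hi
  simp only [hu m i hi, hu' m i hi]

theorem spiderweb_aut_transitive_on_paths_general (b k l : ℕ)
    (u u' : Fin (l + 1) → Fin k → Fin b)
    (hu : stepOK b k l u) (hu' : stepOK b k l u') :
    ∃ θ : (Fin (l + 1) × (Fin k → Fin b)) ≃ (Fin (l + 1) × (Fin k → Fin b)),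
      (∀ x, (θ x).1 = x.1) ∧
      (∀ x y, SpiderAdj b k l x y ↔ SpiderAdj b k l (θ x) (θ y)) ∧
      (∀ m : Fin (l + 1), θ (m, u m) = (m, u' m)) := by
  have hπ : StageCompatible k l fun m i => Equiv.swap (u m i) (u' m i) :=
    StageCompatible.swap hu hu'
  refine ⟨labelPerm _, fun x => rfl, fun x y => (spiderAdj_labelPerm_iff hπ x y).symm,
    fun m => ?_⟩
  simp only [labelPerm_apply, Equiv.swap_apply_left]

/-- The automorphism group of `G_{b,k,l}` (rank-preserving adjacency-preserving
permutations of the vertices) acts transitively on input-to-output paths. -/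
theorem spiderweb_aut_transitive_on_paths (b k l : ℕ) (hb : 2 ≤ b) (hk : 1 ≤ k)
    (u u' : Fin (l + 1) → Fin k → Fin b)
    (hu : stepOK b k l u) (hu' : stepOK b k l u') :
    ∃ θ : (Fin (l + 1) × (Fin k → Fin b)) ≃ (Fin (l + 1) × (Fin k → Fin b)),
      (∀ x, (θ x).1 = x.1) ∧
      (∀ x y, SpiderAdj b k l x y ↔ SpiderAdj b k l (θ x) (θ y)) ∧
      (∀ m : Fin (l + 1), θ (m, u m) = (m, u' m)) :=
  spiderweb_aut_transitive_on_paths_general b k l u u' hu hu'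
end

section
/- The graph G*_{b,k,l} obtained from the spider-web graph G_{b,k,l} by reversing all edge directions and exchanging inputs with outputs is isomorphic to G_{b,k,l}; explicitly, the map sending the vertex labelled a_1⋯a_k in rank m of G_{b,k,l} to the vertex labelled a*_1⋯a*_k in rank l-m, where a*_i = a_j with j ≡ l+1-i (mod k), is an isomorphism. -/
/-- The reversal map: the vertex labelled `a_1 ⋯ a_k` in rank `m` is sent to the
vertex labelled `a*_1 ⋯ a*_k` in rank `l - m`, where `a*_i = a_j` with
`j ≡ l + 1 - i (mod k)` (1-indexed positions; in 0-indexed form the position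
`i` of the image is position `(l + (k - 1 - i)) % k` of the original). -/
def revMap (b k l : ℕ) :
    Fin (l + 1) × (Fin k → Fin b) → Fin (l + 1) × (Fin k → Fin b) :=
  fun x =>
    (⟨l - (x.1 : ℕ), by have := x.1.isLt; omega⟩,
     fun i => x.2 ⟨(l + (k - 1 - (i : ℕ))) % k, Nat.mod_lt _ i.pos⟩)

/-!
In 0-indexed positions the label map of `revMap` is `i ↦ j` with `i + j + 1 ≡ l (mod k)`.
This relation is symmetric, so `revMap` is an involution, and it sends the position
`m mod k` changed by a stage-`m` edge to the position `(l - 1 - m) mod k` changed by the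
stage-`(l - 1 - m)` edge between the reversed ranks.
-/

theorem revIndex_eq_iff {k l i j : ℕ} (hi : i < k) (hj : j < k) :
    (l + (k - 1 - i)) % k = j ↔ i + j + 1 ≡ l [MOD k] :=
  calc (l + (k - 1 - i)) % k = j
      ↔ l + (k - 1 - i) ≡ j [MOD k] := by rw [Nat.ModEq, Nat.mod_eq_of_lt hj]
    _ ↔ l + (k - 1 - i) + (i + 1) ≡ j + (i + 1) [MOD k] :=
        ⟨Nat.ModEq.add_right _, Nat.ModEq.add_right_cancel' _⟩
    _ ↔ i + j + 1 ≡ l [MOD k] := by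
        rw [show l + (k - 1 - i) + (i + 1) = l + k by omega,
          show j + (i + 1) = i + j + 1 by ring, Nat.ModEq, Nat.add_mod_right]
        exact eq_comm

theorem revIndex_revIndex {k l i : ℕ} (hi : i < k) :
    (l + (k - 1 - (l + (k - 1 - i)) % k)) % k = i := by
  have hj : (l + (k - 1 - i)) % k < k := Nat.mod_lt _ (by omega)
  have hij := (revIndex_eq_iff hi hj).1 rfl
  exact (revIndex_eq_iff hj hi).2 (by rwa [add_comm ((l + (k - 1 - i)) % k)])

theorem revIndex_mod {k l m : ℕ} (hk : 0 < k) (hm : m < l) :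
    (l + (k - 1 - m % k)) % k = (l - m - 1) % k := by
  refine (revIndex_eq_iff (Nat.mod_lt _ hk) (Nat.mod_lt _ hk)).2 ?_
  calc m % k + (l - m - 1) % k + 1 ≡ m + (l - m - 1) + 1 [MOD k] :=
        ((Nat.mod_modEq m k).add (Nat.mod_modEq _ k)).add_right 1
    _ = l := by omega

theorem revMap_involutive (b k l : ℕ) : Function.Involutive (revMap b k l) := by
  rintro ⟨⟨m, hm⟩, a⟩
  refine Prod.ext (Fin.ext ?_) (funext fun i => congrArg a (Fin.ext ?_))
  · simp only [revMap]
    omega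
  · exact revIndex_revIndex i.isLt

theorem SpiderAdj.revMap {b k l : ℕ} {x y : Fin (l + 1) × (Fin k → Fin b)}
    (h : SpiderAdj b k l x y) : SpiderAdj b k l (revMap b k l y) (revMap b k l x) := by
  obtain ⟨m, hx, hy, hlab⟩ := h
  have hml := m.isLt
  refine ⟨⟨l - m - 1, by omega⟩, Fin.ext ?_, Fin.ext ?_,
    fun i hi => (hlab _ fun hσi => hi ?_).symm⟩
  · simp only [_root_.revMap, hy, Fin.val_succ, Fin.val_castSucc]
    omega
  · simp only [_root_.revMap, hx, Fin.val_succ, Fin.val_castSucc]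
    omega
  · have := revIndex_revIndex (l := l) i.isLt
    dsimp only at hσi ⊢
    rwa [hσi, revIndex_mod i.pos hml, eq_comm] at this

theorem spiderweb_reversal_iso_general (b k l : ℕ) :
    Function.Bijective (revMap b k l) ∧
    ∀ x y, SpiderAdj b k l x y ↔ SpiderAdj b k l (revMap b k l y) (revMap b k l x) := by
  have hinv := revMap_involutive b k l
  refine ⟨hinv.bijective, fun x y => ⟨SpiderAdj.revMap, fun h => ?_⟩⟩
  simpa only [hinv x, hinv y] using h.revMap

/-- `G*_{b,k,l}`, the reversal of `G_{b,k,l}`, is isomorphic to `G_{b,k,l}`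
via the explicit map `revMap`: it is a bijection on vertices carrying the edges
of `G_{b,k,l}` to the reversed edges. -/
theorem spiderweb_reversal_iso (b k l : ℕ) (hb : 2 ≤ b) (hk : 1 ≤ k) :
    Function.Bijective (revMap b k l) ∧
    ∀ x y, SpiderAdj b k l x y ↔ SpiderAdj b k l (revMap b k l y) (revMap b k l x) :=
  spiderweb_reversal_iso_general b k l
end

section
/- Let Σ be the alphabet of unoverlined digits B = {0,…,b-1} together with overlined digits B̄ = {0̄,…,(b-1)̄}, and let B' = {1,…,b-1}, B̄' = {1̄,…,(b-1)̄}. The regular expression ((Λ + (B̄'(Λ + 0̄ + ⋯ + 0̄^{k-1}))* B̄' 0̄^{k-1}) 0)* is unambiguous: every word it describes has a unique parse, where each stretch ends with an unoverlined 0, each stretch optionally begins with an excursion, each excursion consists of zero or more preliminary segments (a digit from B̄' followed by at most k-1 copies of 0̄) followed by a final segment (a digit from B̄' followed by exactly k-1 copies of 0̄). -/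
/-- The alphabet `B ∪ B̄`: `Sum.inl d` is the unoverlined digit `d`,
`Sum.inr d` is the overlined digit `d̄`. -/
abbrev OverAlphabet (b : ℕ) := Fin b ⊕ Fin b

/-- The word of a segment `(d, j)`: an overlined digit `d̄` followed by `j`
overlined zeros. (For validity, `d ≠ 0`.) -/
def segWord (b : ℕ) [NeZero b] (s : Fin b × ℕ) : List (OverAlphabet b) :=
  Sum.inr s.1 :: List.replicate s.2 (Sum.inr 0)

/-- The word of a stretch, given by its (possibly empty) list of segments
forming an excursion, followed by an unoverlined `0`. -/
def stretchWord (b : ℕ) [NeZero b] (s : List (Fin b × ℕ)) : List (OverAlphabet b) :=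
  s.flatMap (segWord b) ++ [Sum.inl 0]

/-- The word of a parse: the concatenation of its stretches. -/
def parseWord (b : ℕ) [NeZero b] (p : List (List (Fin b × ℕ))) : List (OverAlphabet b) :=
  p.flatMap (stretchWord b)

/-- A parse is valid when in each stretch every segment starts with a digit from
`B̄' = {1̄,…,(b-1)̄}` followed by at most `k-1` overlined zeros (a preliminary
segment), and the last segment of a nonempty excursion has exactly `k-1`
overlined zeros (the final segment). -/
def ValidParse (b k : ℕ) [NeZero b] (p : List (List (Fin b × ℕ))) : Prop :=
  ∀ s ∈ p, (∀ seg ∈ s, seg.1 ≠ 0 ∧ seg.2 ≤ k - 1) ∧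
    ∀ h : s ≠ [], (s.getLast h).2 = k - 1

/-!
The unoverlined `0` occurs in a parse's word only as the last letter of each stretch, so the
stretches are recovered by cutting after each such letter. Inside an excursion every segment
starts with a nonzero overlined digit and continues with overlined zeros only, so the segments
are recovered by cutting before each nonzero overlined digit.
-/

namespace List

variable {α β : Type*}

theorem append_cons_cancel_of_notMem {u v X Y : List α} {a : α} (hu : a ∉ u) (hv : a ∉ v)
    (h : u ++ a :: X = v ++ a :: Y) : u = v ∧ X = Y := by
  induction u generalizing v with
  | nil =>
    cases v with
    | nil => simpa using h
    | cons c v => exact absurd ((cons.inj h).1 ▸ mem_cons_self) hv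
  | cons c u ih =>
    cases v with
    | nil => exact absurd ((cons.inj h).1 ▸ mem_cons_self) hu
    | cons c' v =>
      simp only [cons_append, cons.injEq, mem_cons, not_or] at h hu hv
      obtain ⟨rfl, h⟩ := h
      simpa using ih hu.2 hv.2 h

theorem replicate_append_cancel {m n : ℕ} {A B : List α} {a : α}
    (hA : A.head? ≠ some a) (hB : B.head? ≠ some a)
    (h : replicate m a ++ A = replicate n a ++ B) : m = n ∧ A = B := by
  induction m generalizing n with
  | zero => cases n <;> simp_all [replicate_succ]
  | succ m ih =>
    cases n with
    | zero => subst h; simp_all [replicate_succ]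
    | succ n =>
      simp only [replicate_succ, cons_append, cons.injEq, true_and] at h
      simpa using ih h

theorem injOn_flatMap_of_first_eq {f : β → List α} {P : β → Prop}
    (hne : ∀ x, P x → f x ≠ [])
    (hfirst : ∀ x y (l l' : List β), P x → P y → (∀ z ∈ l, P z) → (∀ z ∈ l', P z) →
      f x ++ l.flatMap f = f y ++ l'.flatMap f → x = y) :
    Set.InjOn (fun l : List β => l.flatMap f) {l | ∀ z ∈ l, P z} := by
  intro l hl l' hl' h
  induction l generalizing l' with
  | nil => cases l' <;> simp_all
  | cons x l ih =>
    cases l' with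
    | nil => simp_all
    | cons y l' =>
      simp only [Set.mem_ofPred_eq, mem_cons, forall_eq_or_imp, flatMap_cons] at hl hl' h
      obtain rfl := hfirst x y l l' hl.1 hl'.1 hl.2 hl'.2 h
      rw [ih hl.2 hl'.2 (append_cancel_left h)]

end List

variable {b : ℕ} [NeZero b]

theorem head?_flatMap_segWord_ne {s : List (Fin b × ℕ)} (hs : ∀ seg ∈ s, seg.1 ≠ 0) :
    (s.flatMap (segWord b)).head? ≠ some (Sum.inr 0) := by
  cases s with
  | nil => simp
  | cons seg s => simpa [segWord] using hs seg (by simp)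

theorem inl_zero_notMem_flatMap_segWord (s : List (Fin b × ℕ)) :
    Sum.inl 0 ∉ s.flatMap (segWord b) := by
  simp [segWord, List.mem_replicate]

theorem injOn_flatMap_segWord :
    Set.InjOn (fun s : List (Fin b × ℕ) => s.flatMap (segWord b)) {s | ∀ seg ∈ s, seg.1 ≠ 0} := by
  refine List.injOn_flatMap_of_first_eq (P := fun seg : Fin b × ℕ => seg.1 ≠ 0)
    (fun _ _ => List.cons_ne_nil _ _) ?_
  rintro ⟨d, j⟩ ⟨e, i⟩ l l' - - hl hl' h
  simp only [segWord, List.cons_append, List.cons.injEq, Sum.inr.injEq] at h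
  obtain ⟨rfl, h⟩ := h
  rw [(List.replicate_append_cancel (head?_flatMap_segWord_ne hl)
    (head?_flatMap_segWord_ne hl') h).1]

theorem injOn_parseWord :
    Set.InjOn (parseWord b) {p : List (List (Fin b × ℕ)) | ∀ s ∈ p, ∀ seg ∈ s, seg.1 ≠ 0} := by
  refine List.injOn_flatMap_of_first_eq
    (P := fun s : List (Fin b × ℕ) => ∀ seg ∈ s, seg.1 ≠ 0)
    (fun _ _ => by simp [stretchWord]) ?_
  rintro s t _ _ hs ht - - h
  simp only [stretchWord, List.append_assoc, List.singleton_append] at h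
  exact injOn_flatMap_segWord hs ht (List.append_cons_cancel_of_notMem
    (inl_zero_notMem_flatMap_segWord s) (inl_zero_notMem_flatMap_segWord t) h).1

theorem regular_expression_unambiguous_general (b k : ℕ)
    [NeZero b] (p q : List (List (Fin b × ℕ)))
    (hp : ValidParse b k p) (hq : ValidParse b k q)
    (hw : parseWord b p = parseWord b q) : p = q :=
  injOn_parseWord (fun s hs seg hseg => ((hp s hs).1 seg hseg).1)
    (fun s hs seg hseg => ((hq s hs).1 seg hseg).1) hw

/-- Unambiguity of the regular expression
`((Λ + (B̄'(Λ + 0̄ + ⋯ + 0̄^{k-1}))* B̄' 0̄^{k-1}) 0)*`: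
every word it describes has a unique parse into stretches, excursions and
segments. -/
theorem regular_expression_unambiguous (b k : ℕ) (hb : 2 ≤ b) (hk : 1 ≤ k)
    [NeZero b] (p q : List (List (Fin b × ℕ)))
    (hp : ValidParse b k p) (hq : ValidParse b k q)
    (hw : parseWord b p = parseWord b q) : p = q :=
  regular_expression_unambiguous_general b k p q hp hq hw
end

section
/- Let b ≥ 2 be an integer, 1/b < q < 1, and let ξ be the unique solution of x = (1 - q(1-x))^b in (0,1). Then as q → 1⁻, 1 - (1-ξ)^2 ∼ 2(1-q)^b; equivalently, lim_{q→1⁻} (1 - (1-ξ)^2) / (2(1-q)^b) = 1. -/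
/-!
Write `x = t ^ b` with `t = 1 - q (1 - x)`. Since `t ≥ 1 - q` we get `(1 - q) ^ b ≤ x`. Conversely
`1 - t = q (1 - t ^ b) ≥ q (1 - t ^ 2)`, and dividing by `1 - t > 0` gives `q t ≤ 1 - q`, hence
`x q ^ b = (q t) ^ b ≤ (1 - q) ^ b`. So `x / (1 - q) ^ b` is squeezed between `1` and `q⁻ᵇ`, both tending
to `1` as `q → 1⁻`; in particular `x → 0`, and `1 - (1 - x) ^ 2 = x (2 - x) ∼ 2 x ∼ 2 (1 - q) ^ b`.
-/

open Filter Topology Set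

section FixedPoint

variable {b : ℕ} {q x : ℝ}

lemma one_sub_pow_le_of_eq_pow (hq : q ∈ Icc 0 1) (hx : 0 ≤ x)
    (hfix : x = (1 - q * (1 - x)) ^ b) : (1 - q) ^ b ≤ x :=
  hfix ▸ pow_le_pow_left₀ (by linarith [hq.2]) (by nlinarith [hq.1]) b

lemma mul_pow_le_one_sub_pow_of_eq_pow (hb : 2 ≤ b) (hq : q ∈ Ioo 0 1) (hx : x ∈ Ioo 0 1)
    (hfix : x = (1 - q * (1 - x)) ^ b) : x * q ^ b ≤ (1 - q) ^ b := by
  obtain ⟨hq0, hq1⟩ := hq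
  obtain ⟨hx0, hx1⟩ := hx
  set t := 1 - q * (1 - x) with ht
  have ht0 : 0 < t := by nlinarith
  have ht1 : t < 1 := by nlinarith [mul_pos hq0 (sub_pos.2 hx1)]
  have hpow : t ^ b ≤ t ^ 2 := pow_le_pow_of_le_one ht0.le ht1.le hb
  have hcontract : q * (1 - t ^ 2) ≤ 1 - t := by
    have : 1 - t = q * (1 - t ^ b) := by rw [← hfix, ht]; ring
    rw [this]
    exact mul_le_mul_of_nonneg_left (by linarith) hq0.le
  have hqt : q * t ≤ 1 - q := by nlinarith [sub_pos.2 ht1]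
  calc x * q ^ b = (q * t) ^ b := by rw [hfix, mul_pow, mul_comm]
    _ ≤ (1 - q) ^ b := pow_le_pow_left₀ (by positivity) hqt b

end FixedPoint

section Asymptotics

variable {b : ℕ} {ξ : ℝ → ℝ}

lemma tendsto_fixedPoint_div_one_sub_pow (hb : 2 ≤ b)
    (hξ : ∀ᶠ q in 𝓝[<] 1, ξ q ∈ Ioo 0 1 ∧ ξ q = (1 - q * (1 - ξ q)) ^ b) :
    Tendsto (fun q => ξ q / (1 - q) ^ b) (𝓝[<] 1) (𝓝 1) := by
  have hq : ∀ᶠ q in 𝓝[<] (1 : ℝ), q ∈ Ioo 0 1 := Ioo_mem_nhdsLT one_pos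
  have hinv : Tendsto (fun q : ℝ => 1 / q ^ b) (𝓝[<] 1) (𝓝 1) := by
    have : ContinuousAt (fun q : ℝ => 1 / q ^ b) 1 :=
      continuousAt_const.div (by fun_prop) (by norm_num)
    simpa using this.tendsto.mono_left nhdsWithin_le_nhds
  refine tendsto_of_tendsto_of_tendsto_of_le_of_le' tendsto_const_nhds hinv ?_ ?_
  · filter_upwards [hq, hξ] with q hq ⟨hx, hfix⟩
    rw [le_div_iff₀ (pow_pos (sub_pos.2 hq.2) b), one_mul]
    exact one_sub_pow_le_of_eq_pow (Ioo_subset_Icc_self hq) hx.1.le hfix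
  · filter_upwards [hq, hξ] with q hq ⟨hx, hfix⟩
    rw [div_le_div_iff₀ (pow_pos (sub_pos.2 hq.2) b) (pow_pos hq.1 b), one_mul]
    exact mul_pow_le_one_sub_pow_of_eq_pow hb hq hx hfix

lemma tendsto_one_sub_one_sub_sq_div (hb : 2 ≤ b)
    (hξ : ∀ᶠ q in 𝓝[<] 1, ξ q ∈ Ioo 0 1 ∧ ξ q = (1 - q * (1 - ξ q)) ^ b) :
    Tendsto (fun q => (1 - (1 - ξ q) ^ 2) / (2 * (1 - q) ^ b)) (𝓝[<] 1) (𝓝 1) := by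
  have hratio := tendsto_fixedPoint_div_one_sub_pow hb hξ
  have hpow : Tendsto (fun q : ℝ => (1 - q) ^ b) (𝓝[<] 1) (𝓝 0) := by
    have : ContinuousAt (fun q : ℝ => (1 - q) ^ b) 1 := by fun_prop
    simpa [zero_pow (by omega : b ≠ 0)] using this.tendsto.mono_left nhdsWithin_le_nhds
  have hξ0 : Tendsto ξ (𝓝[<] 1) (𝓝 0) := by
    refine (one_mul (0 : ℝ) ▸ hratio.mul hpow).congr' ?_
    filter_upwards [self_mem_nhdsWithin] with q (hq : q < 1)
    exact div_mul_cancel₀ _ (pow_ne_zero b (sub_ne_zero.2 hq.ne'))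
  have hlim : Tendsto (fun q => ξ q / (1 - q) ^ b * ((2 - ξ q) / 2)) (𝓝[<] 1) (𝓝 1) := by
    convert hratio.mul ((tendsto_const_nhds (x := (2 : ℝ)).sub hξ0).div_const 2) using 2
    norm_num
  exact hlim.congr fun q => by ring

end Asymptotics

theorem linking_probability_asymptotics_q_to_one (b : ℕ) (hb : 2 ≤ b)
    (ξ : ℝ → ℝ)
    (hξ : ∀ q ∈ Set.Ioo (1 / (b : ℝ)) 1,
      ξ q ∈ Set.Ioo (0 : ℝ) 1 ∧ ξ q = (1 - q * (1 - ξ q)) ^ b) :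
    Tendsto (fun q => (1 - (1 - ξ q) ^ 2) / (2 * (1 - q) ^ b))
      (nhdsWithin 1 (Set.Ioo (1 / (b : ℝ)) 1)) (nhds 1) := by
  have hb1 : 1 / (b : ℝ) < 1 := by
    rw [div_lt_one (by positivity)]
    exact_mod_cast hb
  have hev : ∀ᶠ q in 𝓝[<] (1 : ℝ), ξ q ∈ Ioo 0 1 ∧ ξ q = (1 - q * (1 - ξ q)) ^ b := by
    filter_upwards [Ioo_mem_nhdsLT hb1] using hξ
  exact (tendsto_one_sub_one_sub_sq_div hb hev).mono_left (nhdsWithin_mono _ Ioo_subset_Iio_self)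
end
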